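/- arXiv:2009.02209 — 4 statements merged into one kernel-verified Lean document; each statement's English description precedes it below -/
import Mathlib

section
/- If P is a partial order with the Knaster property (every uncountable set of conditions has an uncountable subset of pairwise compatible conditions) and Q is a ccc partial order, then the product P × Q is ccc. -/
/-- Two conditions are compatible if they have a common extension (stronger = `≤`). -/
def Compat {P : Type*} (le : P → P → Prop) (a b : P) : Prop :=
  ∃ c, le c a ∧ le c b

/-- A partial order is ccc if every antichain (set of pairwise incompatible
conditions) is countable. -/
def CCCrel {P : Type*} (le : P → P → Prop) : Prop :=
  ∀ A : Set P, (∀ a ∈ A, ∀ b ∈ A, a ≠ b → ¬ Compat le a b) → A.Countable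

/-- The Knaster property: every uncountable set of conditions has an uncountable
subset of pairwise compatible conditions. -/
def Knaster {P : Type*} (le : P → P → Prop) : Prop :=
  ∀ A : Set P, ¬ A.Countable →
    ∃ B ⊆ A, ¬ B.Countable ∧ ∀ a ∈ B, ∀ b ∈ B, Compat le a b

/-- The coordinatewise product order. -/
def prodRel {P Q : Type*} (leP : P → P → Prop) (leQ : Q → Q → Prop) :
    P × Q → P × Q → Prop :=
  fun x y => leP x.1 y.1 ∧ leQ x.2 y.2

/-- If `P` has the Knaster property and `Q` is ccc then the product `P × Q` is ccc. -/
theorem stmt8 {P Q : Type*} (leP : P → P → Prop) (leQ : Q → Q → Prop)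
    (hreflP : ∀ p, leP p p) (hreflQ : ∀ q, leQ q q)
    (hK : Knaster leP) (hQ : CCCrel leQ) :
    CCCrel (prodRel leP leQ) := by
  intro A hA
  by_contra hAc
  -- fibers are antichains in Q, hence countable
  have hfib : ∀ p : P, {q | (p, q) ∈ A}.Countable := by
    intro p
    apply hQ
    intro q hq q' hq' hne hc
    obtain ⟨c, hc1, hc2⟩ := hc
    exact hA (p, q) hq (p, q') hq' (by simp [hne])
      ⟨(p, c), ⟨hreflP p, hc1⟩, ⟨hreflP p, hc2⟩⟩
  -- the first-coordinate projection is uncountable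
  have hSc : ¬ (Prod.fst '' A).Countable := by
    intro hS
    apply hAc
    have : A ⊆ ⋃ p ∈ Prod.fst '' A, Prod.mk p '' {q | (p, q) ∈ A} := by
      rintro ⟨p, q⟩ hpq
      exact Set.mem_biUnion ⟨(p, q), hpq, rfl⟩ ⟨q, hpq, rfl⟩
    exact Set.Countable.mono this
      (hS.biUnion fun p _ => (hfib p).image _)
  obtain ⟨B, hBS, hBc, hBcompat⟩ := hK _ hSc
  apply hBc
  -- C : elements of A whose first coordinate lies in B
  set C := {x ∈ A | x.1 ∈ B} with hCdef
  -- snd is injective on C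
  have hinj : Set.InjOn Prod.snd C := by
    rintro x ⟨hxA, hxB⟩ y ⟨hyA, hyB⟩ h
    by_contra hne
    obtain ⟨c, hc1, hc2⟩ := hBcompat _ hxB _ hyB
    exact hA x hxA y hyA hne
      ⟨(c, x.2), ⟨hc1, hreflQ _⟩, ⟨hc2, h ▸ hreflQ _⟩⟩
  -- snd '' C is an antichain in Q
  have hCc : (Prod.snd '' C).Countable := by
    apply hQ
    rintro q ⟨x, ⟨hxA, hxB⟩, rfl⟩ q' ⟨y, ⟨hyA, hyB⟩, rfl⟩ hne hc
    obtain ⟨cQ, hcQ1, hcQ2⟩ := hc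
    obtain ⟨cP, hcP1, hcP2⟩ := hBcompat _ hxB _ hyB
    exact hA x hxA y hyA (fun h => hne (congrArg Prod.snd h))
      ⟨(cP, cQ), ⟨hcP1, hcQ1⟩, ⟨hcP2, hcQ2⟩⟩
  have hCcount : C.Countable := (Set.mapsTo_image _ _).countable_of_injOn hinj hCc
  -- B ⊆ fst '' C
  have : B ⊆ Prod.fst '' C := by
    intro p hp
    obtain ⟨x, hxA, rfl⟩ := hBS hp
    exact ⟨x, ⟨hxA, hp⟩, rfl⟩
  exact (hCcount.image _).mono this
end

section
/- The two-step iteration P_J * Ṫ of Jech's forcing for adding a Suslin tree followed by forcing with the generic tree has a dense σ-closed subset, namely D = {(p, q̌) : p ∈ P_J, height(p) = α+1, q a node of p of level α}. -/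
/-!
Density: a condition `(p, q)` of height `α + 1` is strengthened by moving `q` up to the top level
`α` of `p`, which normality allows.

σ-closure: along a descending sequence `(pₙ, qₙ)` in `D` the trees `pₙ` grow by end-extension and
the nodes `qₙ` form a chain, so their union `Q` is a node at the limit level `δ = sup (αₙ + 1) < ω₁`.
Let `B` be a countable set of branches of `⋃ pₙ` of length `δ`, containing `Q` and passing through
every node of `⋃ pₙ` (each node is pushed up through the `pₙ` by normality). Placing `B` on level
`δ` and all one-point extensions of members of `B` on level `δ + 1` gives a condition `P` of height
`δ + 2`, and `P` together with any one-point extension of `Q` lies in `D` below every `(pₙ, qₙ)`.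
-/

/-- The first uncountable ordinal `ω₁`. -/
noncomputable def omega1 : Ordinal := (Cardinal.aleph 1).ord

/-- A node of a tree: a partial function from ordinals to `ℕ`. -/
def JNode : Type 1 := Ordinal → Option ℕ

/-- `f` is a node of height (level) `β`: its domain is exactly `Iio β`. -/
def HasHeight (f : JNode) (β : Ordinal) : Prop := ∀ γ, (f γ).isSome ↔ γ < β

/-- `g` extends `f` as a partial function. -/
def JExtends (f g : JNode) : Prop := ∀ γ, (f γ).isSome → g γ = f γ

/-- The restriction `f ↾ α` of a node to the levels below `α`. -/
noncomputable def JRestrict (f : JNode) (α : Ordinal) : JNode :=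
  fun γ => if γ < α then f γ else none

/-- A condition of Jech's forcing `P_J`: a countable normal tree of countable
successor height. -/
structure IsJCond (p : Set JNode) : Prop where
  countable : p.Countable
  nodes : ∀ f ∈ p, ∃ β < omega1, HasHeight f β
  closedRestrict : ∀ f ∈ p, ∀ α, JRestrict f α ∈ p
  succHeight : ∃ α < omega1,
    (∀ f ∈ p, ∀ γ, (f γ).isSome → γ ≤ α) ∧ ∃ f ∈ p, HasHeight f (α + 1)
  normal : ∀ f ∈ p, ∀ g ∈ p, ∀ β, HasHeight g β →
    (∀ γ, (f γ).isSome → γ < β) → ∃ h ∈ p, JExtends f h ∧ HasHeight h β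
  splitting : ∀ f ∈ p, ∀ β, HasHeight f β →
    (∃ g ∈ p, ∃ γ, (g γ).isSome ∧ ¬ γ < β) →
    ∃ g ∈ p, ∃ h ∈ p, g ≠ h ∧ JExtends f g ∧ JExtends f h ∧
      HasHeight g (β + 1) ∧ HasHeight h (β + 1)

/-- The order of `P_J`: `q ≤ p` iff `q` end-extends `p`. -/
def JLe (q p : Set JNode) : Prop := ∃ α : Ordinal, p = (fun f => JRestrict f α) '' q

/-- A condition of the two-step iteration `P_J * Ṫ` (restricted to check-names, which
are dense): a pair `(p, q)` with `p ∈ P_J` and `q` a node of `p`; `Ṫ` is the name for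
the generic tree and forcing with it means choosing higher and higher nodes. -/
def InIter (x : Set JNode × JNode) : Prop := IsJCond x.1 ∧ x.2 ∈ x.1

/-- The iteration order: strengthen the tree by end-extension and the node by
tree-extension. -/
def PairLe (y x : Set JNode × JNode) : Prop := JLe y.1 x.1 ∧ JExtends x.2 y.2

/-- The distinguished set `D = {(p, q̌) : height(p) = α + 1, q a node of p of level α}`. -/
def InD (x : Set JNode × JNode) : Prop :=
  InIter x ∧ ∃ α < omega1, HasHeight x.2 (α + 1) ∧
    ∀ f ∈ x.1, ∀ γ, (f γ).isSome → γ ≤ α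

open Order

theorem JExtends.refl (f : JNode) : JExtends f f := fun _ _ => rfl

theorem JExtends.trans {f g h : JNode} (hfg : JExtends f g) (hgh : JExtends g h) :
    JExtends f h := fun γ hγ => by
  rw [hgh γ (by rwa [hfg γ hγ]), hfg γ hγ]

theorem HasHeight.le_of_forall_lt {f : JNode} {a b : Ordinal} (hf : HasHeight f a)
    (h : ∀ γ, (f γ).isSome → γ < b) : a ≤ b :=
  le_of_not_gt fun hba => lt_irrefl b (h b ((hf b).2 hba))

theorem HasHeight.le_add_one {f : JNode} {a b : Ordinal} (hf : HasHeight f a)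
    (h : ∀ γ, (f γ).isSome → γ ≤ b) : a ≤ b + 1 :=
  hf.le_of_forall_lt fun γ hγ => lt_add_one_iff.2 (h γ hγ)

theorem HasHeight.unique {f : JNode} {a b : Ordinal} (ha : HasHeight f a) (hb : HasHeight f b) :
    a = b :=
  le_antisymm (ha.le_of_forall_lt fun γ => (hb γ).1) (hb.le_of_forall_lt fun γ => (ha γ).1)

theorem jRestrict_eq_self {f : JNode} {a : Ordinal} (h : ∀ γ, (f γ).isSome → γ < a) :
    JRestrict f a = f := by
  funext γ
  unfold JRestrict
  split_ifs with hγ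
  · rfl
  · exact (Option.not_isSome_iff_eq_none.1 (mt (h γ) hγ)).symm

theorem jRestrict_jRestrict (f : JNode) (a b : Ordinal) :
    JRestrict (JRestrict f a) b = JRestrict f (min a b) := by
  funext γ
  simp only [JRestrict, lt_min_iff]
  split_ifs <;> tauto

theorem jRestrict_congr {f g : JNode} {a : Ordinal} (h : ∀ γ < a, f γ = g γ) :
    JRestrict f a = JRestrict g a := by
  funext γ
  unfold JRestrict
  split_ifs with hγ
  · exact h γ hγ
  · rfl

theorem lt_of_isSome_jRestrict {f : JNode} {a γ : Ordinal} (h : (JRestrict f a γ).isSome) :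
    γ < a := by
  unfold JRestrict at h
  split_ifs at h with hγ
  · exact hγ
  · simp at h

noncomputable def extendNode (b : JNode) (v : ℕ) (δ : Ordinal) : JNode :=
  fun γ => if γ = δ then some v else b γ

theorem extendNode_of_ne (b : JNode) (v : ℕ) {δ γ : Ordinal} (h : γ ≠ δ) :
    extendNode b v δ γ = b γ :=
  if_neg h

theorem hasHeight_extendNode {b : JNode} {δ : Ordinal} (hb : HasHeight b δ) (v : ℕ) :
    HasHeight (extendNode b v δ) (δ + 1) := by
  intro γ
  rcases eq_or_ne γ δ with rfl | hγ
  · simp [extendNode]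
  · rw [extendNode_of_ne b v hγ, hb γ, lt_add_one_iff, hγ.le_iff_lt]

theorem jExtends_extendNode {b : JNode} {δ : Ordinal} (hb : HasHeight b δ) (v : ℕ) :
    JExtends b (extendNode b v δ) := fun γ hγ =>
  extendNode_of_ne b v ((hb γ).1 hγ).ne

theorem jRestrict_extendNode (b : JNode) (v : ℕ) {a δ : Ordinal} (h : a ≤ δ) :
    JRestrict (extendNode b v δ) a = JRestrict b a :=
  jRestrict_congr fun _ hγ => extendNode_of_ne b v (hγ.trans_le h).ne

section Chain

open scoped Classical in
noncomputable def chainLimit (u : ℕ → JNode) : JNode :=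
  fun γ => if h : ∃ k, (u k γ).isSome then u h.choose γ else none

variable {u : ℕ → JNode}

theorem jExtends_of_le (hu : ∀ k, JExtends (u k) (u (k + 1))) {k m : ℕ} (hkm : k ≤ m) :
    JExtends (u k) (u m) := by
  induction m, hkm using Nat.le_induction with
  | base => exact JExtends.refl _
  | succ m _ ih => exact ih.trans (hu m)

theorem chainLimit_eq (hu : ∀ k, JExtends (u k) (u (k + 1))) {k : ℕ} {γ : Ordinal}
    (h : (u k γ).isSome) : chainLimit u γ = u k γ := by
  have hex : ∃ j, (u j γ).isSome := ⟨k, h⟩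
  simp only [chainLimit, dif_pos hex]
  rw [← jExtends_of_le hu (le_max_left hex.choose k) γ hex.choose_spec,
    jExtends_of_le hu (le_max_right _ k) γ h]

theorem isSome_chainLimit {γ : Ordinal} :
    (chainLimit u γ).isSome ↔ ∃ k, (u k γ).isSome := by
  unfold chainLimit
  split_ifs with h
  · exact iff_of_true h.choose_spec h
  · simpa using h

theorem jExtends_chainLimit (hu : ∀ k, JExtends (u k) (u (k + 1))) (k : ℕ) :
    JExtends (u k) (chainLimit u) := fun _ h => chainLimit_eq hu h

theorem hasHeight_chainLimit {β : ℕ → Ordinal} (hh : ∀ k, HasHeight (u k) (β k)) :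
    HasHeight (chainLimit u) (⨆ k, β k) := by
  intro γ
  simp only [isSome_chainLimit, hh _ γ]
  exact ⟨fun ⟨k, hk⟩ => hk.trans_le (le_ciSup (Ordinal.bddAbove_of_small) k),
    exists_lt_of_lt_ciSup⟩

theorem jRestrict_chainLimit (hu : ∀ k, JExtends (u k) (u (k + 1))) {k : ℕ} {a : Ordinal}
    (h : ∀ γ < a, (u k γ).isSome) : JRestrict (chainLimit u) a = JRestrict (u k) a :=
  jRestrict_congr fun γ hγ => chainLimit_eq hu (h γ hγ)

end Chain

theorem exists_seq_of_forall_exists {X : Type*} {P : ℕ → X → Prop} {R : X → X → Prop} {x₀ : X}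
    (h₀ : P 0 x₀) (hstep : ∀ k x, P k x → ∃ y, P (k + 1) y ∧ R x y) :
    ∃ c : ℕ → X, c 0 = x₀ ∧ (∀ k, P k (c k)) ∧ ∀ k, R (c k) (c (k + 1)) := by
  choose next hnext hR using hstep
  let c : (k : ℕ) → {x // P k x} :=
    fun k => Nat.rec ⟨x₀, h₀⟩ (fun k x => ⟨next k x.1 x.2, hnext k x.1 x.2⟩) k
  exact ⟨fun k => (c k).1, rfl, fun k => (c k).2, fun k => hR k (c k).1 (c k).2⟩

section Ordinals

noncomputable def supSucc (α : ℕ → Ordinal) : Ordinal := ⨆ n, α n + 1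

variable {α : ℕ → Ordinal}

theorem add_one_le_supSucc (α : ℕ → Ordinal) (n : ℕ) : α n + 1 ≤ supSucc α :=
  le_ciSup (Ordinal.bddAbove_of_small) n

theorem lt_supSucc (α : ℕ → Ordinal) (n : ℕ) : α n < supSucc α :=
  (lt_add_one _).trans_le (add_one_le_supSucc α n)

theorem exists_lt_of_lt_supSucc {γ : Ordinal} (h : γ < supSucc α) : ∃ n, γ < α n + 1 :=
  exists_lt_of_lt_ciSup h

theorem supSucc_add_left (hα : Monotone α) (n₀ : ℕ) :
    supSucc (fun k => α (n₀ + k)) = supSucc α :=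
  le_antisymm (ciSup_le fun k => add_one_le_supSucc α _)
    (ciSup_le fun n => (by gcongr; exact hα (Nat.le_add_left n n₀) :
      α n + 1 ≤ α (n₀ + n) + 1).trans (add_one_le_supSucc _ n))

theorem omega1_eq : omega1 = Ordinal.omega 1 := by simp [omega1]

theorem add_one_lt_omega1 {a : Ordinal} (h : a < omega1) : a + 1 < omega1 := by
  rw [omega1_eq] at *
  exact (Cardinal.isSuccLimit_omega 1).add_one_lt h

theorem supSucc_lt_omega1 (h : ∀ n, α n < omega1) : supSucc α < omega1 := by
  rw [supSucc, omega1_eq]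
  exact Ordinal.iSup_lt_omega_one fun n => omega1_eq ▸ add_one_lt_omega1 (h n)

end Ordinals

def LevelsLE (p : Set JNode) (α : Ordinal) : Prop := ∀ f ∈ p, ∀ γ, (f γ).isSome → γ ≤ α

theorem IsJCond.subset_of_jLe {p p' : Set JNode} (hp' : IsJCond p') (h : JLe p' p) : p ⊆ p' := by
  obtain ⟨β, rfl⟩ := h
  rintro _ ⟨f, hf, rfl⟩
  exact hp'.closedRestrict f hf β

theorem JLe.jRestrict_mem {p p' : Set JNode} (hle : JLe p' p) (hp : IsJCond p) {q : JNode}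
    (hq : q ∈ p) {a : Ordinal} (ha : (q a).isSome) {f : JNode} (hf : f ∈ p') :
    JRestrict f (a + 1) ∈ p := by
  obtain ⟨β, rfl⟩ := hle
  obtain ⟨g, -, rfl⟩ := hq
  have hβ : a + 1 ≤ β := add_one_le_iff.2 (lt_of_isSome_jRestrict ha)
  rw [← min_eq_right hβ, ← jRestrict_jRestrict]
  exact hp.closedRestrict _ ⟨f, hf, rfl⟩ _

theorem jLe_of_forall_jRestrict_mem {p P : Set JNode} {α : Ordinal} (hsub : p ⊆ P)
    (hp : LevelsLE p α) (hP : ∀ g ∈ P, JRestrict g (α + 1) ∈ p) : JLe P p :=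
  ⟨α + 1, Set.ext fun f => ⟨fun hf => ⟨f, hsub hf,
    jRestrict_eq_self fun γ hγ => lt_add_one_iff.2 (hp f hf γ hγ)⟩,
    by rintro ⟨g, hg, rfl⟩; exact hP g hg⟩⟩

theorem IsJCond.exists_jExtends_hasHeight {p : Set JNode} {α : Ordinal} {q f : JNode}
    (hp : IsJCond p) (hα : LevelsLE p α) (hq : q ∈ p) (hqh : HasHeight q (α + 1))
    (hf : f ∈ p) : ∃ h ∈ p, JExtends f h ∧ HasHeight h (α + 1) :=
  hp.normal f hf q hq _ hqh fun γ hγ => lt_add_one_iff.2 (hα f hf γ hγ)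

theorem exists_inD_pairLe {x : Set JNode × JNode} (hx : InIter x) : ∃ y, InD y ∧ PairLe y x := by
  obtain ⟨p, f⟩ := x
  obtain ⟨hp, hf⟩ := hx
  obtain ⟨α, hαω, hα, q, hq, hqh⟩ := hp.succHeight
  obtain ⟨h, hh, hfh, hhh⟩ := hp.exists_jExtends_hasHeight hα hq hqh hf
  exact ⟨(p, h), ⟨⟨hp, hh⟩, α, hαω, hhh, hα⟩,
    jLe_of_forall_jRestrict_mem subset_rfl hα fun g hg => hp.closedRestrict g hg _, hfh⟩

structure IsDescendingInD (p : ℕ → Set JNode) (q : ℕ → JNode) (α : ℕ → Ordinal) : Prop where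
  cond : ∀ n, IsJCond (p n)
  mem : ∀ n, q n ∈ p n
  hasHeight : ∀ n, HasHeight (q n) (α n + 1)
  levelsLE : ∀ n, LevelsLE (p n) (α n)
  lt_omega1 : ∀ n, α n < omega1
  jLe_succ : ∀ n, JLe (p (n + 1)) (p n)
  jExtends_succ : ∀ n, JExtends (q n) (q (n + 1))

def IsLimitBranch (p : ℕ → Set JNode) (α : ℕ → Ordinal) (b : JNode) : Prop :=
  HasHeight b (supSucc α) ∧ ∀ n, JRestrict b (α n + 1) ∈ p n

structure IsBranchSet (p : ℕ → Set JNode) (α : ℕ → Ordinal) (B : Set JNode) : Prop where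
  countable : B.Countable
  isLimitBranch : ∀ b ∈ B, IsLimitBranch p α b
  exists_jExtends : ∀ n, ∀ f ∈ p n, ∃ b ∈ B, JExtends f b

def limitTree (p : ℕ → Set JNode) (α : ℕ → Ordinal) (B : Set JNode) : Set JNode :=
  ((⋃ n, p n) ∪ B) ∪ ⋃ v : ℕ, (fun b => extendNode b v (supSucc α)) '' B

namespace IsDescendingInD

variable {p : ℕ → Set JNode} {q : ℕ → JNode} {α : ℕ → Ordinal}

theorem subset_of_le (hd : IsDescendingInD p q α) {n m : ℕ} (h : n ≤ m) : p n ⊆ p m := by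
  induction m, h using Nat.le_induction with
  | base => exact subset_rfl
  | succ m _ ih => exact ih.trans ((hd.cond (m + 1)).subset_of_jLe (hd.jLe_succ m))

theorem isSome_q (hd : IsDescendingInD p q α) (n : ℕ) : (q n (α n)).isSome :=
  (hd.hasHeight n _).2 (lt_add_one _)

theorem monotone (hd : IsDescendingInD p q α) : Monotone α := fun n m h =>
  lt_add_one_iff.1 <| (hd.hasHeight m _).1 <| by
    rw [jExtends_of_le hd.jExtends_succ h _ (hd.isSome_q n)]
    exact hd.isSome_q n

theorem jRestrict_mem_of_le (hd : IsDescendingInD p q α) {n m : ℕ} (h : n ≤ m) {f : JNode}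
    (hf : f ∈ p m) : JRestrict f (α n + 1) ∈ p n := by
  induction m, h using Nat.le_induction generalizing f with
  | base => exact (hd.cond n).closedRestrict f hf _
  | succ m hnm ih =>
    have hfm := (hd.jLe_succ m).jRestrict_mem (hd.cond m) (hd.mem m) (hd.isSome_q m) hf
    have hαn : α n + 1 ≤ α m + 1 := by gcongr; exact hd.monotone hnm
    simpa only [jRestrict_jRestrict, min_eq_right hαn] using ih hfm

theorem jRestrict_mem_iUnion (hd : IsDescendingInD p q α) {g : JNode}
    (hg : ∀ n, JRestrict g (α n + 1) ∈ p n) {a : Ordinal} (ha : a < supSucc α) :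
    ∃ n, JRestrict g a ∈ p n := by
  obtain ⟨n, hn⟩ := exists_lt_of_lt_supSucc ha
  refine ⟨n, ?_⟩
  simpa only [jRestrict_jRestrict, min_eq_right hn.le] using
    (hd.cond n).closedRestrict _ (hg n) a

theorem isLimitBranch_chainLimit (hd : IsDescendingInD p q α) {c : ℕ → JNode} {n₀ : ℕ}
    (hc : ∀ k, JExtends (c k) (c (k + 1))) (hcp : ∀ k, c k ∈ p (n₀ + k))
    (hch : ∀ k, HasHeight (c k) (α (n₀ + k) + 1)) : IsLimitBranch p α (chainLimit c) := by
  refine ⟨supSucc_add_left hd.monotone n₀ ▸ hasHeight_chainLimit hch, fun n => ?_⟩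
  have hαn : α n + 1 ≤ α (n₀ + n) + 1 := by gcongr; exact hd.monotone (Nat.le_add_left n n₀)
  rw [jRestrict_chainLimit hc fun γ hγ => (hch n γ).2 (hγ.trans_le hαn)]
  exact hd.jRestrict_mem_of_le (Nat.le_add_left n n₀) (hcp n)

theorem exists_jExtends_isLimitBranch (hd : IsDescendingInD p q α) {n₀ : ℕ} {f : JNode}
    (hf : f ∈ p n₀) : ∃ b, JExtends f b ∧ IsLimitBranch p α b := by
  have htop : ∀ k, ∀ g ∈ p (n₀ + k), ∃ h ∈ p (n₀ + k), JExtends g h ∧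
      HasHeight h (α (n₀ + k) + 1) := fun k g hg =>
    (hd.cond _).exists_jExtends_hasHeight (hd.levelsLE _) (hd.mem _) (hd.hasHeight _) hg
  obtain ⟨c₀, hc₀, hfc₀, hc₀h⟩ := htop 0 f hf
  obtain ⟨c, rfl, hcP, hc⟩ := exists_seq_of_forall_exists
    (P := fun k h => h ∈ p (n₀ + k) ∧ HasHeight h (α (n₀ + k) + 1)) (R := JExtends)
    ⟨hc₀, hc₀h⟩ fun k g hg => by
      obtain ⟨h, hh, hgh, hhh⟩ := htop (k + 1) g (hd.subset_of_le (by omega) hg.1)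
      exact ⟨h, ⟨hh, hhh⟩, hgh⟩
  exact ⟨chainLimit c, hfc₀.trans (jExtends_chainLimit hc 0),
    hd.isLimitBranch_chainLimit hc (fun k => (hcP k).1) fun k => (hcP k).2⟩

theorem isLimitBranch_chainLimit_q (hd : IsDescendingInD p q α) :
    IsLimitBranch p α (chainLimit q) :=
  hd.isLimitBranch_chainLimit (n₀ := 0) hd.jExtends_succ (by simpa using hd.mem)
    (by simpa using hd.hasHeight)

theorem exists_isBranchSet (hd : IsDescendingInD p q α) :
    ∃ B, IsBranchSet p α B ∧ chainLimit q ∈ B := by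
  choose br hbr using fun f : ↥(⋃ n, p n) =>
    hd.exists_jExtends_isLimitBranch (Set.mem_iUnion.1 f.2).choose_spec
  have : Countable ↥(⋃ n, p n) :=
    (Set.countable_iUnion fun n => (hd.cond n).countable).to_subtype
  refine ⟨insert (chainLimit q) (Set.range br), ⟨(Set.countable_range br).insert _, ?_, ?_⟩,
    Set.mem_insert _ _⟩
  · rintro b (rfl | ⟨f, rfl⟩)
    exacts [hd.isLimitBranch_chainLimit_q, (hbr f).2]
  · intro n f hf
    let f' : ↥(⋃ n, p n) := ⟨f, Set.mem_iUnion.2 ⟨n, hf⟩⟩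
    exact ⟨br f', Set.mem_insert_of_mem _ ⟨f', rfl⟩, (hbr f').1⟩

end IsDescendingInD

section LimitTree

variable {p : ℕ → Set JNode} {q : ℕ → JNode} {α : ℕ → Ordinal} {B : Set JNode}

theorem mem_limitTree {f : JNode} : f ∈ limitTree p α B ↔
    ((∃ n, f ∈ p n) ∨ f ∈ B) ∨ ∃ v : ℕ, ∃ b ∈ B, extendNode b v (supSucc α) = f := by
  simp only [limitTree, Set.mem_union, Set.mem_iUnion, Set.mem_image]

theorem mem_limitTree_of_mem {n : ℕ} {f : JNode} (hf : f ∈ p n) : f ∈ limitTree p α B :=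
  mem_limitTree.2 (.inl (.inl ⟨n, hf⟩))

theorem mem_limitTree_of_mem_branchSet {b : JNode} (hb : b ∈ B) : b ∈ limitTree p α B :=
  mem_limitTree.2 (.inl (.inr hb))

theorem extendNode_mem_limitTree {b : JNode} (hb : b ∈ B) (v : ℕ) :
    extendNode b v (supSucc α) ∈ limitTree p α B :=
  mem_limitTree.2 (.inr ⟨v, b, hb, rfl⟩)

theorem levelsLE_limitTree (hd : IsDescendingInD p q α) (hB : IsBranchSet p α B) :
    LevelsLE (limitTree p α B) (supSucc α) := by
  intro f hf γ hγ
  rcases mem_limitTree.1 hf with (⟨n, hfn⟩ | hfB) | ⟨v, b, hb, rfl⟩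
  · exact (hd.levelsLE n f hfn γ hγ).trans (lt_supSucc α n).le
  · exact ((hB.isLimitBranch f hfB).1 γ |>.1 hγ).le
  · exact lt_add_one_iff.1 ((hasHeight_extendNode (hB.isLimitBranch b hb).1 v γ).1 hγ)

theorem jRestrict_mem_of_mem_limitTree (hd : IsDescendingInD p q α) (hB : IsBranchSet p α B)
    {f : JNode} (hf : f ∈ limitTree p α B) (n : ℕ) : JRestrict f (α n + 1) ∈ p n := by
  rcases mem_limitTree.1 hf with (⟨m, hfm⟩ | hfB) | ⟨v, b, hb, rfl⟩
  · rcases le_total m n with h | h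
    · exact (hd.cond n).closedRestrict f (hd.subset_of_le h hfm) _
    · exact hd.jRestrict_mem_of_le h hfm
  · exact (hB.isLimitBranch f hfB).2 n
  · rw [jRestrict_extendNode b v (add_one_le_supSucc α n)]
    exact (hB.isLimitBranch b hb).2 n

theorem IsBranchSet.mem_of_mem_limitTree (hB : IsBranchSet p α B) {f : JNode}
    (hf : f ∈ limitTree p α B) {β : Ordinal} (hβ : β < supSucc α) (hfβ : ¬ (f β).isSome) :
    ∃ n, f ∈ p n := by
  rcases mem_limitTree.1 hf with (hfU | hfB) | ⟨v, b, hb, rfl⟩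
  · exact hfU
  · exact absurd (((hB.isLimitBranch f hfB).1 β).2 hβ) hfβ
  · exact absurd ((hasHeight_extendNode (hB.isLimitBranch b hb).1 v β).2
      (hβ.trans (lt_add_one _))) hfβ

theorem IsBranchSet.exists_mem_jExtends (hB : IsBranchSet p α B) {f : JNode}
    (hf : (∃ n, f ∈ p n) ∨ f ∈ B) : ∃ b ∈ B, JExtends f b :=
  hf.elim (fun ⟨n, hfn⟩ => hB.exists_jExtends n f hfn) fun hfB => ⟨f, hfB, JExtends.refl f⟩

theorem exists_hasHeight_of_mem_limitTree (hd : IsDescendingInD p q α)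
    (hB : IsBranchSet p α B) {f : JNode} (hf : f ∈ limitTree p α B) :
    ∃ β < omega1, HasHeight f β := by
  have hδ := supSucc_lt_omega1 hd.lt_omega1
  rcases mem_limitTree.1 hf with (⟨n, hfn⟩ | hfB) | ⟨v, b, hb, rfl⟩
  · exact (hd.cond n).nodes f hfn
  · exact ⟨_, hδ, (hB.isLimitBranch f hfB).1⟩
  · exact ⟨_, add_one_lt_omega1 hδ, hasHeight_extendNode (hB.isLimitBranch b hb).1 v⟩

theorem jRestrict_mem_limitTree (hd : IsDescendingInD p q α) (hB : IsBranchSet p α B)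
    {f : JNode} (hf : f ∈ limitTree p α B) (a : Ordinal) : JRestrict f a ∈ limitTree p α B := by
  rcases lt_or_ge a (supSucc α) with ha | ha
  · obtain ⟨n, hn⟩ := hd.jRestrict_mem_iUnion (jRestrict_mem_of_mem_limitTree hd hB hf) ha
    exact mem_limitTree_of_mem hn
  rcases mem_limitTree.1 hf with (⟨n, hfn⟩ | hfB) | ⟨v, b, hb, rfl⟩
  · exact mem_limitTree_of_mem ((hd.cond n).closedRestrict f hfn a)
  · rwa [jRestrict_eq_self fun γ hγ => ((hB.isLimitBranch f hfB).1 γ |>.1 hγ).trans_le ha]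
  · rcases ha.eq_or_lt with rfl | ha
    · rw [jRestrict_extendNode b v le_rfl,
        jRestrict_eq_self fun γ => ((hB.isLimitBranch b hb).1 γ).1]
      exact mem_limitTree_of_mem_branchSet hb
    · rwa [jRestrict_eq_self fun γ hγ => (levelsLE_limitTree hd hB _ hf γ hγ).trans_lt ha]

theorem IsBranchSet.exists_jExtends_hasHeight (hB : IsBranchSet p α B) {b : JNode} (hb : b ∈ B)
    {β : Ordinal} (hβ : supSucc α ≤ β) (hβ' : β ≤ supSucc α + 1) :
    ∃ h ∈ limitTree p α B, JExtends b h ∧ HasHeight h β := by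
  have hbh := (hB.isLimitBranch b hb).1
  rcases hβ.eq_or_lt with rfl | hβ
  · exact ⟨b, mem_limitTree_of_mem_branchSet hb, JExtends.refl b, hbh⟩
  · rw [le_antisymm hβ' (add_one_le_iff.2 hβ)]
    exact ⟨_, extendNode_mem_limitTree hb 0, jExtends_extendNode hbh 0, hasHeight_extendNode hbh 0⟩

theorem exists_jExtends_hasHeight_limitTree (hd : IsDescendingInD p q α)
    (hB : IsBranchSet p α B) {f g : JNode} (hf : f ∈ limitTree p α B)
    (hg : g ∈ limitTree p α B) {β : Ordinal} (hgβ : HasHeight g β)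
    (hfβ : ∀ γ, (f γ).isSome → γ < β) : ∃ h ∈ limitTree p α B, JExtends f h ∧ HasHeight h β := by
  rcases lt_or_ge β (supSucc α) with hβ | hβ
  · obtain ⟨m, hfm⟩ := hB.mem_of_mem_limitTree hf hβ fun h => lt_irrefl β (hfβ β h)
    obtain ⟨n, hgn⟩ := hB.mem_of_mem_limitTree hg hβ fun h => lt_irrefl β ((hgβ β).1 h)
    obtain ⟨h, hh, hfh, hhβ⟩ := (hd.cond (max m n)).normal f
      (hd.subset_of_le (le_max_left m n) hfm) g (hd.subset_of_le (le_max_right m n) hgn) β hgβ hfβ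
    exact ⟨h, mem_limitTree_of_mem hh, hfh, hhβ⟩
  have hβ' : β ≤ supSucc α + 1 := hgβ.le_add_one (levelsLE_limitTree hd hB g hg)
  rcases mem_limitTree.1 hf with hfUB | ⟨v, b, hb, rfl⟩
  · obtain ⟨b, hb, hfb⟩ := hB.exists_mem_jExtends hfUB
    obtain ⟨h, hh, hbh, hhβ⟩ := hB.exists_jExtends_hasHeight hb hβ hβ'
    exact ⟨h, hh, hfb.trans hbh, hhβ⟩
  · have hbh := hasHeight_extendNode (hB.isLimitBranch b hb).1 v
    rw [le_antisymm hβ' (hbh.le_of_forall_lt hfβ)]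
    exact ⟨_, hf, JExtends.refl _, hbh⟩

theorem IsBranchSet.exists_split (hB : IsBranchSet p α B) {b : JNode} (hb : b ∈ B) :
    ∃ g ∈ limitTree p α B, ∃ h ∈ limitTree p α B, g ≠ h ∧ JExtends b g ∧ JExtends b h ∧
      HasHeight g (supSucc α + 1) ∧ HasHeight h (supSucc α + 1) := by
  have hbh := (hB.isLimitBranch b hb).1
  refine ⟨_, extendNode_mem_limitTree hb 0, _, extendNode_mem_limitTree hb 1, fun h => ?_,
    jExtends_extendNode hbh 0, jExtends_extendNode hbh 1, hasHeight_extendNode hbh 0,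
    hasHeight_extendNode hbh 1⟩
  simpa [extendNode] using congrFun h (supSucc α)

theorem exists_split_limitTree (hd : IsDescendingInD p q α) (hB : IsBranchSet p α B)
    {f g : JNode} (hf : f ∈ limitTree p α B) {β : Ordinal} (hfβ : HasHeight f β)
    (hg : g ∈ limitTree p α B) {γ : Ordinal} (hγ : (g γ).isSome) (hβγ : ¬ γ < β) :
    ∃ g ∈ limitTree p α B, ∃ h ∈ limitTree p α B, g ≠ h ∧ JExtends f g ∧ JExtends f h ∧
      HasHeight g (β + 1) ∧ HasHeight h (β + 1) := by
  rcases lt_or_ge β (supSucc α) with hβ | hβ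
  · obtain ⟨m, hfm⟩ := hB.mem_of_mem_limitTree hf hβ fun h => lt_irrefl β ((hfβ β).1 h)
    obtain ⟨n, hn⟩ := exists_lt_of_lt_supSucc hβ
    have hβk : ¬ α (max m n) < β :=
      not_lt.2 ((lt_add_one_iff.1 hn).trans (hd.monotone (le_max_right m n)))
    obtain ⟨g', hg', h', hh', hne, hfg', hfh', hg'β, hh'β⟩ := (hd.cond (max m n)).splitting f
      (hd.subset_of_le (le_max_left m n) hfm) β hfβ ⟨_, hd.mem _, _, hd.isSome_q _, hβk⟩
    exact ⟨g', mem_limitTree_of_mem hg', h', mem_limitTree_of_mem hh', hne, hfg', hfh', hg'β, hh'β⟩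
  obtain rfl : β = supSucc α :=
    le_antisymm ((not_lt.1 hβγ).trans (levelsLE_limitTree hd hB g hg γ hγ)) hβ
  rcases mem_limitTree.1 hf with hfUB | ⟨v, b, hb, rfl⟩
  · obtain ⟨b, hb, hfb⟩ := hB.exists_mem_jExtends hfUB
    obtain ⟨g', hg', h', hh', hne, hbg', hbh', hg'β, hh'β⟩ := hB.exists_split hb
    exact ⟨g', hg', h', hh', hne, hfb.trans hbg', hfb.trans hbh', hg'β, hh'β⟩
  · exact absurd (hfβ.unique (hasHeight_extendNode (hB.isLimitBranch b hb).1 v))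
      (lt_add_one _).ne

theorem isJCond_limitTree (hd : IsDescendingInD p q α) (hB : IsBranchSet p α B) :
    IsJCond (limitTree p α B) where
  countable := ((Set.countable_iUnion fun n => (hd.cond n).countable).union hB.countable).union
    (Set.countable_iUnion fun _ => hB.countable.image _)
  nodes _ := exists_hasHeight_of_mem_limitTree hd hB
  closedRestrict _ := jRestrict_mem_limitTree hd hB
  succHeight := by
    obtain ⟨b, hb, -⟩ := hB.exists_jExtends 0 (q 0) (hd.mem 0)
    exact ⟨_, supSucc_lt_omega1 hd.lt_omega1, levelsLE_limitTree hd hB, _,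
      extendNode_mem_limitTree hb 0, hasHeight_extendNode (hB.isLimitBranch b hb).1 0⟩
  normal _ hf _ hg _ := exists_jExtends_hasHeight_limitTree hd hB hf hg
  splitting _ hf _ hfβ := fun ⟨_, hg, _, hγ, hβγ⟩ => exists_split_limitTree hd hB hf hfβ hg hγ hβγ

theorem jLe_limitTree (hd : IsDescendingInD p q α) (hB : IsBranchSet p α B) (n : ℕ) :
    JLe (limitTree p α B) (p n) :=
  jLe_of_forall_jRestrict_mem (fun _ => mem_limitTree_of_mem) (hd.levelsLE n) fun _ hg =>
    jRestrict_mem_of_mem_limitTree hd hB hg n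

theorem IsDescendingInD.exists_inD_forall_pairLe (hd : IsDescendingInD p q α) :
    ∃ y, InD y ∧ ∀ n, PairLe y (p n, q n) := by
  obtain ⟨B, hB, hQ⟩ := hd.exists_isBranchSet
  have hQh := hd.isLimitBranch_chainLimit_q.1
  exact ⟨(limitTree p α B, extendNode (chainLimit q) 0 (supSucc α)),
    ⟨⟨isJCond_limitTree hd hB, extendNode_mem_limitTree hQ 0⟩, supSucc α,
      supSucc_lt_omega1 hd.lt_omega1, hasHeight_extendNode hQh 0, levelsLE_limitTree hd hB⟩,
    fun n => ⟨jLe_limitTree hd hB n,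
      (jExtends_chainLimit hd.jExtends_succ n).trans (jExtends_extendNode hQh 0)⟩⟩

end LimitTree

/-- The two-step iteration `P_J * Ṫ` of Jech's forcing followed by forcing with the
generic tree has a dense σ-closed subset, namely
`D = {(p, q̌) : height(p) = α + 1, q a node of p of level α}`:
`D` is dense, and every descending `ω`-sequence in `D` has a lower bound in `D`. -/
theorem stmt13 :
    (∀ x : Set JNode × JNode, InIter x → ∃ y, InD y ∧ PairLe y x) ∧
    (∀ s : ℕ → Set JNode × JNode, (∀ n, InD (s n)) →
      (∀ n, PairLe (s (n + 1)) (s n)) →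
      ∃ y, InD y ∧ ∀ n, PairLe y (s n)) := by
  refine ⟨fun x hx => exists_inD_pairLe hx, fun s hD hle => ?_⟩
  choose α hαω hqh hα using fun n => (hD n).2
  have hd : IsDescendingInD (fun n => (s n).1) (fun n => (s n).2) α :=
    ⟨fun n => (hD n).1.1, fun n => (hD n).1.2, hqh, hα, hαω, fun n => (hle n).1,
      fun n => (hle n).2⟩
  exact hd.exists_inD_forall_pairLe
end

section
/- σ-closed forcings preserve Suslin trees: if P is a σ-closed partial order and T is a Suslin tree in the ground model, then T remains a Suslin tree after forcing with P. -/
/-- `σ`-closed: every descending `ω`-sequence of conditions has a lower bound. -/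
def SigmaClosed {P : Type*} (le : P → P → Prop) : Prop :=
  ∀ f : ℕ → P, (∀ n, le (f (n + 1)) (f n)) → ∃ q, ∀ n, le q (f n)

/-- `A ⊆ P × T` (read "`p ⊩ ť ∈ Ȧ`") is forced below `p₀` to be an antichain of the
tree `T` (antichain = pairwise incomparable in the tree order `leT`): no condition
below `p₀` forces two distinct comparable nodes into the named set. -/
def ForcedTreeAntichainBelow {P T : Type*} (leP : P → P → Prop)
    (leT : T → T → Prop) (A : Set (P × T)) (p₀ : P) : Prop :=
  ∀ t t' : T, t ≠ t' → (leT t t' ∨ leT t' t) →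
    ¬ ∃ p, leP p p₀ ∧ (∃ p₁, leP p p₁ ∧ (p₁, t) ∈ A) ∧
      (∃ p₂, leP p p₂ ∧ (p₂, t') ∈ A)

/-- The name `A` is forced below `p₀` to be uncountable. -/
def ForcedUncountableBelow {P T : Type*} (leP : P → P → Prop)
    (leT : T → T → Prop) (A : Set (P × T)) (p₀ : P) : Prop :=
  ∀ B : Set T, B.Countable → ∀ p, leP p p₀ →
    ∃ p' t, leP p' p ∧ t ∉ B ∧ ∃ p'', leP p' p'' ∧ (p'', t) ∈ A

section Aux

variable {P T : Type*} (leP : P → P → Prop) (A : Set (P × T)) (p₀ : P)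

/-- The set of tree nodes that `p` forces into the name `A`. -/
def auxAp (p : P) : Set T := {t | ∃ p'', leP p p'' ∧ (p'', t) ∈ A}

variable (hstep : ∀ q, leP q p₀ →
    ∃ p' t, leP p' q ∧ t ∉ auxAp leP A q ∧ t ∈ auxAp leP A p') (t₀ : T)

/-- Transfinite recursion along `ω₁`: at each stage, if there is a condition `q ≤ p₀`
below all previously chosen conditions, apply the step function to get a new condition
and a new tree node. -/
noncomputable def auxG : (Cardinal.aleph 1).ord.ToType → P × T :=
  WellFounded.fix wellFounded_lt (fun x IH =>
    @dite _ (∃ q, leP q p₀ ∧ ∀ y (hy : y < x), leP q (IH y hy).1)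
      (Classical.propDecidable _)
      (fun h => ⟨(hstep h.choose h.choose_spec.1).choose,
        (hstep h.choose h.choose_spec.1).choose_spec.choose⟩)
      (fun _ => (p₀, t₀)))

theorem auxG_spec (x : (Cardinal.aleph 1).ord.ToType)
    (h : ∃ q, leP q p₀ ∧ ∀ y, y < x → leP q ((auxG leP A p₀ hstep t₀) y).1) :
    ∃ q, leP q p₀ ∧ (∀ y, y < x → leP q ((auxG leP A p₀ hstep t₀) y).1) ∧
      leP ((auxG leP A p₀ hstep t₀) x).1 q ∧
      ((auxG leP A p₀ hstep t₀) x).2 ∉ auxAp leP A q ∧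
      ((auxG leP A p₀ hstep t₀) x).2 ∈ auxAp leP A ((auxG leP A p₀ hstep t₀) x).1 := by
  have e := WellFounded.fix_eq wellFounded_lt (fun x IH =>
    @dite _ (∃ q, leP q p₀ ∧ ∀ y (hy : y < x), leP q (IH y hy).1)
      (Classical.propDecidable _)
      (fun h => ⟨(hstep h.choose h.choose_spec.1).choose,
        (hstep h.choose h.choose_spec.1).choose_spec.choose⟩)
      (fun _ => ((p₀, t₀) : P × T))) x
  rw [show (WellFounded.fix wellFounded_lt (fun x IH =>
    @dite _ (∃ q, leP q p₀ ∧ ∀ y (hy : y < x), leP q (IH y hy).1)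
      (Classical.propDecidable _)
      (fun h => ⟨(hstep h.choose h.choose_spec.1).choose,
        (hstep h.choose h.choose_spec.1).choose_spec.choose⟩)
      (fun _ => ((p₀, t₀) : P × T)))) = auxG leP A p₀ hstep t₀ from rfl] at e
  dsimp only at e
  rw [dif_pos h] at e
  have hs := (hstep h.choose h.choose_spec.1).choose_spec.choose_spec
  refine ⟨h.choose, h.choose_spec.1, fun y hy => h.choose_spec.2 y hy, ?_, ?_, ?_⟩
  · rw [e]; exact hs.1
  · rw [e]; exact hs.2.1
  · rw [e]; exact hs.2.2

end Aux

/-- σ-closed forcings preserve Suslin trees: if `P` is σ-closed and `T` is a Suslin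
tree of the ground model (tree order `leT`: reflexive, transitive, compatible nodes
comparable, all antichains and chains countable), then `P` cannot force an uncountable
antichain into `T`; hence `T` remains Suslin after forcing with `P`. -/
theorem stmt14 {P T : Type*} (leP : P → P → Prop) (leT : T → T → Prop)
    (hreflP : ∀ p, leP p p)
    (htransP : ∀ a b c, leP a b → leP b c → leP a c)
    (hσ : SigmaClosed leP)
    (hreflT : ∀ t, leT t t)
    (htransT : ∀ a b c, leT a b → leT b c → leT a c)
    (hcompT : ∀ a b : T, (∃ c, leT a c ∧ leT b c) → (leT a b ∨ leT b a))
    (hanti : ∀ A : Set T, (∀ a ∈ A, ∀ b ∈ A, a ≠ b → ¬ (leT a b ∨ leT b a)) →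
      A.Countable)
    (hchain : ∀ C : Set T, (∀ a ∈ C, ∀ b ∈ C, leT a b ∨ leT b a) → C.Countable) :
    ∀ (A : Set (P × T)) (p₀ : P), ForcedTreeAntichainBelow leP leT A p₀ →
      ¬ ForcedUncountableBelow leP leT A p₀ := by
  intro A p₀ hAC hU
  classical
  -- auxAp is antitone and countable below p₀
  have hApMono : ∀ p q, leP q p → auxAp leP A p ⊆ auxAp leP A q := by
    rintro p q hqp t ⟨p'', h1, h2⟩
    exact ⟨p'', htransP _ _ _ hqp h1, h2⟩
  have hApCount : ∀ q, leP q p₀ → (auxAp leP A q).Countable := by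
    intro q hq
    refine hanti _ ?_
    rintro a ⟨pa, hpa, ha⟩ b ⟨pb, hpb, hb⟩ hne hcomp
    exact hAC a b hne hcomp ⟨q, hq, ⟨pa, hpa, ha⟩, ⟨pb, hpb, hb⟩⟩
  have hstep : ∀ q, leP q p₀ →
      ∃ p' t, leP p' q ∧ t ∉ auxAp leP A q ∧ t ∈ auxAp leP A p' := by
    intro q hq
    obtain ⟨p', t, h1, h2, h3⟩ := hU (auxAp leP A q) (hApCount q hq) q hq
    exact ⟨p', t, h1, h2, h3⟩
  obtain ⟨_, t₀, -⟩ := hU ∅ Set.countable_empty p₀ (hreflP p₀)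
  set W := (Cardinal.aleph.{0} 1).ord.ToType with hW
  set g := auxG leP A p₀ hstep t₀ with hg
  -- main induction: the recursion never degenerates and has the expected properties
  have main : ∀ x : W, leP (g x).1 p₀ ∧ (g x).2 ∈ auxAp leP A (g x).1 ∧
      ∀ y, y < x → leP (g x).1 (g y).1 ∧ (g x).2 ≠ (g y).2 := by
    intro x
    induction x using WellFoundedLT.induction with
    | _ x IH =>
      -- a lower bound for all earlier conditions
      have good : ∃ q, leP q p₀ ∧ ∀ y, y < x → leP q (g y).1 := by
        by_cases hx : ∃ y : W, y < x
        · have hcnt : (Set.Iio x).Countable :=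
            (Cardinal.countable_iff_lt_aleph_one _).2 (Cardinal.mk_Iio_ord_toType x)
          obtain ⟨e, he⟩ := hcnt.exists_eq_range ⟨hx.choose, hx.choose_spec⟩
          have he_mem : ∀ n, e n < x := by
            intro n
            have : e n ∈ Set.Iio x := he ▸ Set.mem_range_self n
            exact this
          -- a nondecreasing cofinal reindexing
          let m : ℕ → W := fun n => Nat.rec (e 0) (fun k mk => max mk (e (k + 1))) n
          have hm_lt : ∀ n, m n < x := by
            intro n
            induction n with
            | zero => exact he_mem 0
            | succ k ih => exact max_lt ih (he_mem (k + 1))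
          have hm_mono : ∀ n, m n ≤ m (n + 1) := fun n => le_max_left _ _
          have he_le : ∀ n, e n ≤ m n := by
            intro n
            cases n with
            | zero => exact le_rfl
            | succ k => exact le_max_right _ _
          have hf : ∀ n, leP (g (m (n + 1))).1 (g (m n)).1 := by
            intro n
            rcases eq_or_lt_of_le (hm_mono n) with h | h
            · rw [h]; exact hreflP _
            · exact ((IH (m (n + 1)) (hm_lt (n + 1))).2.2 (m n) h).1
          obtain ⟨q, hq⟩ := hσ (fun n => (g (m n)).1) hf
          refine ⟨q, htransP _ _ _ (hq 0) (IH (m 0) (hm_lt 0)).1, ?_⟩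
          intro y hy
          have : y ∈ Set.range e := he ▸ hy
          obtain ⟨k, hk⟩ := this
          rcases eq_or_lt_of_le (hk ▸ he_le k) with h | h
          · rw [h]; exact hq k
          · exact htransP _ _ _ (hq k) (((IH (m k) (hm_lt k)).2.2 y h).1)
        · exact ⟨p₀, hreflP p₀, fun y hy => absurd ⟨y, hy⟩ hx⟩
      obtain ⟨q, hq1, hq2, hq3, hq4, hq5⟩ := auxG_spec leP A p₀ hstep t₀ x good
      refine ⟨htransP _ _ _ hq3 hq1, hq5, ?_⟩
      intro y hy
      have hy1 : (g y).2 ∈ auxAp leP A q :=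
        hApMono _ _ (hq2 y hy) (IH y hy).2.1
      refine ⟨htransP _ _ _ hq3 (hq2 y hy), ?_⟩
      intro hcontra
      exact hq4 (hcontra ▸ hy1)
  -- the chosen nodes form an uncountable antichain in T
  have hinj : Function.Injective fun x : W => (g x).2 := by
    intro x y hxy
    by_contra hne
    rcases lt_or_gt_of_ne hne with h | h
    · exact ((main y).2.2 x h).2 hxy.symm
    · exact ((main x).2.2 y h).2 hxy
  have hAset : ∀ a ∈ Set.range (fun x : W => (g x).2),
      ∀ b ∈ Set.range (fun x : W => (g x).2), a ≠ b → ¬ (leT a b ∨ leT b a) := by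
    rintro a ⟨x, rfl⟩ b ⟨y, rfl⟩ hne hcomp
    have hxy : x ≠ y := fun h => hne (by rw [h])
    rcases lt_or_gt_of_ne hxy with h | h
    · obtain ⟨p1, hp1, hm1⟩ := (main y).2.1
      obtain ⟨p2, hp2, hm2⟩ := hApMono _ _ ((main y).2.2 x h).1 (main x).2.1
      exact hAC _ _ hne.symm (hcomp.symm) ⟨(g y).1, (main y).1,
        ⟨p1, hp1, hm1⟩, ⟨p2, hp2, hm2⟩⟩
    · obtain ⟨p1, hp1, hm1⟩ := (main x).2.1
      obtain ⟨p2, hp2, hm2⟩ := hApMono _ _ ((main x).2.2 y h).1 (main y).2.1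
      exact hAC _ _ hne hcomp ⟨(g x).1, (main x).1,
        ⟨p1, hp1, hm1⟩, ⟨p2, hp2, hm2⟩⟩
  have hcount : (Set.range (fun x : W => (g x).2)).Countable := hanti _ hAset
  have hcW : Countable W := by
    have : Countable ↥(Set.range (fun x : W => (g x).2)) :=
      Set.countable_coe_iff.2 hcount
    exact Function.Injective.countable
      (f := fun x : W => (⟨(g x).2, Set.mem_range_self x⟩ :
        ↥(Set.range (fun x : W => (g x).2))))
      (fun a b hab => hinj (congrArg Subtype.val hab))
  have h3 := Cardinal.mk_le_aleph0_iff.mpr hcW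
  rw [hW, Cardinal.mk_ord_toType] at h3
  exact absurd h3 (not_le.2 Cardinal.aleph0_lt_aleph_one)
end

section
/- Let R ⊆ ω₁ be stationary. The club shooting forcing P_R, whose conditions are countable functions p : α+1 → R (α < ω₁) with closed range, ordered by end-extension, is ω-distributive: for every condition p and every P_R-name ẋ for an element of 2^ω there is q ≤ p and a ground-model real x with q ⊩ ẋ = x. -/
/-- `C` is a club (closed unbounded) subset of `ω₁`. -/
def IsClubOmega1 (C : Set Ordinal) : Prop :=
  C ⊆ Set.Iio omega1 ∧
  (∀ α < omega1, ∃ β ∈ C, α < β) ∧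
  (∀ δ < omega1, 0 < δ → (∀ β < δ, ∃ γ ∈ C, β < γ ∧ γ < δ) → δ ∈ C)

/-- `S` is a stationary subset of `ω₁`. -/
def IsStationaryOmega1 (S : Set Ordinal) : Prop :=
  S ⊆ Set.Iio omega1 ∧ ∀ C, IsClubOmega1 C → (S ∩ C).Nonempty

/-- A closed bounded nonempty subset of `ω₁` (the range of a countable function
`p : α + 1 → ω₁` with closed image). -/
def IsClosedBdd (c : Set Ordinal) : Prop :=
  c.Nonempty ∧ (∃ α < omega1, ∀ x ∈ c, x ≤ α) ∧
    ∀ δ, 0 < δ → (∀ β < δ, ∃ γ ∈ c, β < γ ∧ γ < δ) → δ ∈ c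

/-- A condition of the club shooting forcing `P_R`: a closed bounded nonempty
subset of `R`. -/
def IsCond (R : Set Ordinal) (c : Set Ordinal) : Prop := c ⊆ R ∧ IsClosedBdd c

/-- End-extension: `d ≤ c` iff `d ⊇ c` and all new points lie above `c`. -/
def CondLe (d c : Set Ordinal) : Prop :=
  c ⊆ d ∧ ∀ x ∈ d, x ∉ c → ∀ y ∈ c, y < x

/-!
Fusion argument, with a closure club in place of an elementary submodel. Fix a strategy: in
round `n` extend into the `n`-th dense set, then add a point of `R` above a prescribed target.
Below a countable `δ` there are only countably many finite lists of targets, so the `δ` that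
bound every play along a list of smaller targets form a club, and stationarity gives such a
`δ` in `R`. Playing with targets enumerating `δ` yields a chain of conditions whose union is
cofinal in `δ`; the union is closed below `δ`, so adding `δ ∈ R` on top gives a condition
below the whole chain.
-/

open Set Ordinal

lemma omega1_eq_omega_one : omega1 = ω₁ := Cardinal.ord_aleph 1

lemma isSuccLimit_omega1 : Order.IsSuccLimit omega1 :=
  Cardinal.isSuccLimit_ord (Cardinal.aleph0_le_aleph 1)

lemma countable_Iio_of_lt_omega1 {α : Ordinal} (h : α < omega1) : (Iio α).Countable := by
  rw [← Cardinal.le_aleph0_iff_set_countable, Cardinal.mk_Iio_ordinal, Cardinal.lift_le_aleph0,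
    ← Cardinal.lt_aleph_one_iff]
  exact Cardinal.lt_ord.mp h

def closurePoints (B : List Ordinal → Ordinal) : Set Ordinal :=
  {δ | δ < omega1 ∧ ∀ l : List Ordinal, (∀ x ∈ l, x < δ) → B l < δ}

lemma exists_gt_forall_list_lt {B : List Ordinal → Ordinal}
    (hB : ∀ l, (∀ x ∈ l, x < omega1) → B l < omega1) {β : Ordinal} (hβ : β < omega1) :
    ∃ η < omega1, β < η ∧ ∀ l : List Ordinal, (∀ x ∈ l, x < β) → B l < η := by
  have := (countable_Iio_of_lt_omega1 hβ).to_subtype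
  set η := ⨆ l : List (Iio β), B (l.map Subtype.val)
  have hη : η < omega1 := by
    rw [omega1_eq_omega_one] at hB hβ ⊢
    refine Ordinal.iSup_lt_omega_one fun l => hB _ fun x hx => ?_
    obtain ⟨y, -, rfl⟩ := List.mem_map.1 hx
    exact y.2.trans hβ
  refine ⟨Order.succ (max β η), isSuccLimit_omega1.succ_lt (max_lt hβ hη),
    (le_max_left β η).trans_lt (Order.lt_succ _), fun l hl => ?_⟩
  refine lt_of_le_of_lt ?_ ((le_max_right β η).trans_lt (Order.lt_succ _))
  convert Ordinal.le_iSup (fun l : List (Iio β) => B (l.map Subtype.val))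
    (l.attach.map fun x => ⟨x.1, hl x.1 x.2⟩)
  simp

lemma isClubOmega1_closurePoints (B : List Ordinal → Ordinal)
    (hB : ∀ l, (∀ x ∈ l, x < omega1) → B l < omega1) : IsClubOmega1 (closurePoints B) := by
  refine ⟨fun δ hδ => hδ.1, fun α hα => ?_, fun δ hδ hδ0 hcof => ⟨hδ, fun l hl => ?_⟩⟩
  · choose! F hFω hF hFB using fun β (hβ : β < omega1) => exists_gt_forall_list_lt hB hβ
    set a : ℕ → Ordinal := fun n => F^[n] α
    have haω : ∀ n, a n < omega1 := fun n => by
      induction n with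
      | zero => exact hα
      | succ n ih => simpa only [a, Function.iterate_succ_apply'] using hFω _ ih
    have haS : ∀ n, a (n + 1) = F (a n) := fun n => Function.iterate_succ_apply' F n α
    have ha : StrictMono a := strictMono_nat_of_lt_succ fun n => haS n ▸ hF _ (haω n)
    refine ⟨⨆ n, a n, ⟨?_, fun l hl => ?_⟩, ?_⟩
    · rw [omega1_eq_omega_one] at haω ⊢
      exact Ordinal.iSup_lt_omega_one haω
    · have hev : ∀ᶠ n in Filter.atTop, ∀ x ∈ l, x < a n := by
        refine (Filter.eventually_all_finite l.finite_toSet).2 fun x hx => ?_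
        obtain ⟨n, hn⟩ := Ordinal.lt_iSup_iff.1 (hl x hx)
        exact Filter.eventually_atTop.2 ⟨n, fun m hm => hn.trans_le (ha.monotone hm)⟩
      obtain ⟨n, hn⟩ := hev.exists
      exact (haS n ▸ hFB _ (haω n) l hn).trans_le (Ordinal.le_iSup a (n + 1))
    · exact (ha (Nat.lt_succ_self 0)).trans_le (Ordinal.le_iSup a 1)
  · have hsup : l.toFinset.sup id < δ :=
      (Finset.sup_lt_iff (by simpa using hδ0)).2 fun x hx => hl x (List.mem_toFinset.1 hx)
    obtain ⟨γ, hγ, hsupγ, hγδ⟩ := hcof _ hsup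
    exact (hγ.2 l fun x hx =>
      (Finset.le_sup (f := id) (List.mem_toFinset.2 hx)).trans_lt hsupγ).trans hγδ

lemma IsStationaryOmega1.exists_mem_gt {R : Set Ordinal} (hR : IsStationaryOmega1 R)
    {β : Ordinal} (hβ : β < omega1) : ∃ γ ∈ R, β < γ ∧ γ < omega1 := by
  obtain ⟨γ, hγR, hγω, hβγ⟩ :=
    hR.2 _ (isClubOmega1_closurePoints (fun _ => β) fun _ _ => hβ)
  exact ⟨γ, hγR, hβγ [] (by simp), hγω⟩

lemma condLe_refl (c : Set Ordinal) : CondLe c c :=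
  ⟨subset_rfl, fun _ hx hxc _ _ => absurd hx hxc⟩

lemma CondLe.trans {a b c : Set Ordinal} (hab : CondLe a b) (hbc : CondLe b c) : CondLe a c := by
  refine ⟨hbc.1.trans hab.1, fun x hx hxc y hy => ?_⟩
  by_cases hxb : x ∈ b
  · exact hbc.2 x hxb hxc y hy
  · exact hab.2 x hx hxb y (hbc.1 hy)

lemma CondLe.mem_of_lt {c d : Set Ordinal} (h : CondLe d c) {x y : Ordinal} (hx : x ∈ d)
    (hy : y ∈ c) (hxy : x < y) : x ∈ c :=
  by_contra fun hxc => (h.2 x hx hxc y hy).not_gt hxy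

lemma condLe_insert {c : Set Ordinal} {γ : Ordinal} (h : ∀ x ∈ c, x < γ) :
    CondLe (insert γ c) c := by
  refine ⟨subset_insert _ _, fun x hx hxc y hy => ?_⟩
  obtain rfl | hx := hx
  · exact h y hy
  · exact absurd hx hxc

lemma condLe_of_le {t : ℕ → Set Ordinal} (ht : ∀ n, CondLe (t (n + 1)) (t n)) {m n : ℕ}
    (h : m ≤ n) : CondLe (t n) (t m) := by
  induction n, h using Nat.le_induction with
  | base => exact condLe_refl _
  | succ n _ ih => exact (ht n).trans ih

lemma condLe_iUnion {t : ℕ → Set Ordinal} (ht : ∀ n, CondLe (t (n + 1)) (t n)) (n : ℕ) :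
    CondLe (⋃ m, t m) (t n) := by
  refine ⟨subset_iUnion t n, fun x hx hxn y hy => ?_⟩
  obtain ⟨m, hm⟩ := mem_iUnion.1 hx
  rcases le_total m n with h | h
  · exact absurd ((condLe_of_le ht h).1 hm) hxn
  · exact (condLe_of_le ht h).2 x hm hxn y hy

lemma IsClosedBdd.le_csSup {c : Set Ordinal} (hc : IsClosedBdd c) {x : Ordinal} (hx : x ∈ c) :
    x ≤ sSup c :=
  _root_.le_csSup (let ⟨α, _, hα⟩ := hc.2.1; ⟨α, hα⟩) hx

lemma IsClosedBdd.csSup_lt_omega1 {c : Set Ordinal} (hc : IsClosedBdd c) : sSup c < omega1 :=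
  let ⟨_, hα, hcα⟩ := hc.2.1
  (csSup_le hc.1 hcα).trans_lt hα

lemma isCond_insert {R c : Set Ordinal} {γ : Ordinal} (hcR : c ⊆ R) (hγR : γ ∈ R)
    (hγ : γ < omega1) (hlt : ∀ x ∈ c, x < γ)
    (hclosed : ∀ δ < γ, 0 < δ → (∀ β < δ, ∃ x ∈ c, β < x ∧ x < δ) → δ ∈ c) :
    IsCond R (insert γ c) := by
  have hle : ∀ x ∈ insert γ c, x ≤ γ := by
    rintro x (rfl | hx)
    exacts [le_rfl, (hlt x hx).le]
  refine ⟨insert_subset hγR hcR, ⟨γ, mem_insert _ _⟩, ⟨γ, hγ, hle⟩, fun δ hδ hcof => ?_⟩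
  rcases lt_trichotomy δ γ with hδγ | rfl | hγδ
  · refine mem_insert_of_mem _ (hclosed δ hδγ hδ fun β hβ => ?_)
    obtain ⟨x, rfl | hx, hβx, hxδ⟩ := hcof β hβ
    · exact absurd hxδ hδγ.not_gt
    · exact ⟨x, hx, hβx, hxδ⟩
  · exact mem_insert _ _
  · obtain ⟨x, hx, hγx, -⟩ := hcof γ hγδ
    exact absurd (hle x hx) hγx.not_ge

lemma IsCond.insert {R c : Set Ordinal} (hc : IsCond R c) {γ : Ordinal} (hγR : γ ∈ R)
    (hγ : γ < omega1) (hlt : ∀ x ∈ c, x < γ) : IsCond R (insert γ c) :=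
  isCond_insert hc.1 hγR hγ hlt fun δ _ => hc.2.2.2 δ

lemma isCond_insert_iUnion {R : Set Ordinal} {t : ℕ → Set Ordinal} (ht : ∀ n, IsCond R (t n))
    (hchain : ∀ n, CondLe (t (n + 1)) (t n)) {δ : Ordinal} (hδR : δ ∈ R) (hδ : δ < omega1)
    (hlt : ∀ x ∈ ⋃ n, t n, x < δ) (hcof : ∀ β < δ, ∃ n, ∃ γ ∈ t n, β < γ) :
    IsCond R (insert δ (⋃ n, t n)) := by
  refine isCond_insert (iUnion_subset fun n => (ht n).1) hδR hδ hlt fun δ' hδ' hpos hlim => ?_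
  obtain ⟨n, γ, hγ, hδ'γ⟩ := hcof δ' hδ'
  refine mem_iUnion.2 ⟨n, (ht n).2.2.2 δ' hpos fun β hβ => ?_⟩
  obtain ⟨x, hx, hβx, hxδ'⟩ := hlim β hβ
  exact ⟨x, (condLe_iUnion hchain n).mem_of_lt hx hγ (hxδ'.trans hδ'γ), hβx, hxδ'⟩

section Strategy

variable {R : Set Ordinal} {D : ℕ → Set Ordinal → Set Ordinal} {next : Ordinal → Ordinal}

variable (D next) in
def stepAbove (n : ℕ) (β : Ordinal) (c : Set Ordinal) : Set Ordinal :=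
  insert (next (max β (sSup (D n c)))) (D n c)

-- The list holds the targets, most recent first; its length is the number of the round.
variable (D next) in
def runStrategy (p : Set Ordinal) : List Ordinal → Set Ordinal
  | [] => p
  | β :: l => stepAbove D next l.length β (runStrategy p l)

lemma stepAbove_spec (hD : ∀ n c, IsCond R c → IsCond R (D n c) ∧ CondLe (D n c) c)
    (hnext : ∀ β < omega1, next β ∈ R ∧ β < next β ∧ next β < omega1)
    {n : ℕ} {β : Ordinal} {c : Set Ordinal} (hc : IsCond R c) (hβ : β < omega1) :
    IsCond R (stepAbove D next n β c) ∧ CondLe (stepAbove D next n β c) (D n c) ∧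
      ∃ γ ∈ stepAbove D next n β c, β < γ := by
  have hDc := (hD n c hc).1
  obtain ⟨hR, hgt, hlt⟩ := hnext _ (max_lt hβ hDc.2.csSup_lt_omega1)
  have hbelow : ∀ x ∈ D n c, x < next (max β (sSup (D n c))) := fun x hx =>
    (hDc.2.le_csSup hx).trans_lt ((le_max_right _ _).trans_lt hgt)
  exact ⟨hDc.insert hR hlt hbelow, condLe_insert hbelow,
    ⟨_, mem_insert _ _, (le_max_left _ _).trans_lt hgt⟩⟩

lemma isCond_runStrategy (hD : ∀ n c, IsCond R c → IsCond R (D n c) ∧ CondLe (D n c) c)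
    (hnext : ∀ β < omega1, next β ∈ R ∧ β < next β ∧ next β < omega1)
    {p : Set Ordinal} (hp : IsCond R p) :
    ∀ l : List Ordinal, (∀ x ∈ l, x < omega1) → IsCond R (runStrategy D next p l)
  | [], _ => hp
  | β :: l, hl => (stepAbove_spec hD hnext
      (isCond_runStrategy hD hnext hp l fun x hx => hl x (List.mem_cons_of_mem _ hx))
      (hl β List.mem_cons_self)).1

lemma exists_condLe_of_mem_closurePoints
    (hD : ∀ n c, IsCond R c → IsCond R (D n c) ∧ CondLe (D n c) c)
    (hnext : ∀ β < omega1, next β ∈ R ∧ β < next β ∧ next β < omega1)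
    {p : Set Ordinal} (hp : IsCond R p) {δ : Ordinal} (hδR : δ ∈ R)
    (hδ : δ ∈ closurePoints fun l => sSup (runStrategy D next p l)) :
    ∃ q, IsCond R q ∧ CondLe q p ∧ ∀ n, ∃ c, IsCond R c ∧ CondLe q (D n c) := by
  have hδ0 : 0 < δ := zero_le.trans_lt (hδ.2 [] (by simp))
  obtain ⟨s, hs⟩ := (countable_Iio_of_lt_omega1 hδ.1).exists_eq_range ⟨0, hδ0⟩
  have hsδ : ∀ n, s n < δ := fun n => (hs ▸ mem_range_self n : s n ∈ Iio δ)
  set L : ℕ → List Ordinal := fun n => (List.range n).reverse.map s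
  have hL : ∀ n, ∀ x ∈ L n, x < δ := by simp [L, hsδ]
  set t : ℕ → Set Ordinal := fun n => runStrategy D next p (L n)
  have ht : ∀ n, IsCond R (t n) := fun n =>
    isCond_runStrategy hD hnext hp _ fun x hx => (hL n x hx).trans hδ.1
  have htS : ∀ n, t (n + 1) = stepAbove D next n (s n) (t n) := fun n => by
    simp [t, L, List.range_succ, runStrategy]
  have hstep := fun n => htS n ▸ stepAbove_spec hD hnext (ht n) ((hsδ n).trans hδ.1)
  have hchain : ∀ n, CondLe (t (n + 1)) (t n) := fun n => (hstep n).2.1.trans (hD n _ (ht n)).2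
  have hlt : ∀ x ∈ ⋃ n, t n, x < δ := fun x hx =>
    let ⟨n, hn⟩ := mem_iUnion.1 hx
    ((ht n).2.le_csSup hn).trans_lt (hδ.2 _ (hL n))
  have hcof : ∀ β < δ, ∃ n, ∃ γ ∈ t n, β < γ := fun β hβ =>
    let ⟨n, hn⟩ : β ∈ range s := hs ▸ hβ
    ⟨n + 1, hn ▸ (hstep n).2.2⟩
  have hqt : ∀ n, CondLe (insert δ (⋃ n, t n)) (t n) := fun n =>
    (condLe_insert hlt).trans (condLe_iUnion hchain n)
  exact ⟨_, isCond_insert_iUnion ht hchain hδR hδ.1 hlt hcof, hqt 0,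
    fun n => ⟨t n, ht n, (hqt (n + 1)).trans (hstep n).2.1⟩⟩

end Strategy

theorem exists_condLe_forall_dense {R : Set Ordinal} (hR : IsStationaryOmega1 R)
    {E : ℕ → Set (Set Ordinal)} (hE : ∀ n c, IsCond R c → ∃ d, IsCond R d ∧ CondLe d c ∧ d ∈ E n)
    {p : Set Ordinal} (hp : IsCond R p) :
    ∃ q, IsCond R q ∧ CondLe q p ∧ ∀ n, ∃ d ∈ E n, CondLe q d := by
  choose! D hD using hE
  choose! next hnext using fun β (hβ : β < omega1) => hR.exists_mem_gt hβ
  have hD' : ∀ n c, IsCond R c → IsCond R (D n c) ∧ CondLe (D n c) c := fun n c hc =>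
    ⟨(hD n c hc).1, (hD n c hc).2.1⟩
  obtain ⟨δ, hδR, hδ⟩ := hR.2 _ <| isClubOmega1_closurePoints _ fun l hl =>
    (isCond_runStrategy hD' hnext hp l hl).2.csSup_lt_omega1
  obtain ⟨q, hq, hqp, hqD⟩ := exists_condLe_of_mem_closurePoints hD' hnext hp hδR hδ
  refine ⟨q, hq, hqp, fun n => ?_⟩
  obtain ⟨c, hc, hqc⟩ := hqD n
  exact ⟨D n c, (hD n c hc).2.2, hqc⟩

theorem stmt15_general (R : Set Ordinal)
    (hstat : IsStationaryOmega1 R)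
    (ν : ℕ → Bool → Set (Set Ordinal))
    (hopen : ∀ n b, ∀ c ∈ ν n b, ∀ d, IsCond R d → CondLe d c → d ∈ ν n b)
    (hdense : ∀ n, ∀ c, IsCond R c →
      ∃ d, IsCond R d ∧ CondLe d c ∧ (d ∈ ν n true ∨ d ∈ ν n false)) :
    ∀ p, IsCond R p → ∃ q, IsCond R q ∧ CondLe q p ∧
      ∃ x : ℕ → Bool, ∀ n, q ∈ ν n (x n) := by
  classical
  intro p hp
  obtain ⟨q, hq, hqp, hqd⟩ :=
    exists_condLe_forall_dense hstat (E := fun n => {d | d ∈ ν n true ∨ d ∈ ν n false}) hdense hp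
  choose d hdν hqd using hqd
  refine ⟨q, hq, hqp, fun n => decide (d n ∈ ν n true), fun n => hopen n _ (d n) ?_ q hq (hqd n)⟩
  by_cases h : d n ∈ ν n true
  · simp [h]
  · simpa [h] using (hdν n).resolve_left h

/-- The club shooting forcing for a stationary `R ⊆ ω₁` is `ω`-distributive: for every
condition `p` and every `P_R`-name `ẋ` for an element of `2^ω` (presented by the open
sets `ν n b` of conditions forcing `ẋ(n) = b`, which are dense-below and consistent),
there are `q ≤ p` and a ground-model real `x` with `q ⊩ ẋ = x̌`. -/
theorem stmt15 (R : Set Ordinal) (hRsub : R ⊆ Set.Iio omega1)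
    (hstat : IsStationaryOmega1 R)
    (ν : ℕ → Bool → Set (Set Ordinal))
    (hcond : ∀ n b, ∀ c ∈ ν n b, IsCond R c)
    (hopen : ∀ n b, ∀ c ∈ ν n b, ∀ d, IsCond R d → CondLe d c → d ∈ ν n b)
    (hdense : ∀ n, ∀ c, IsCond R c →
      ∃ d, IsCond R d ∧ CondLe d c ∧ (d ∈ ν n true ∨ d ∈ ν n false))
    (hcons : ∀ n, ∀ c ∈ ν n true, ∀ d ∈ ν n false,
      ¬ ∃ e, IsCond R e ∧ CondLe e c ∧ CondLe e d) :
    ∀ p, IsCond R p → ∃ q, IsCond R q ∧ CondLe q p ∧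
      ∃ x : ℕ → Bool, ∀ n, q ∈ ν n (x n) :=
  stmt15_general R hstat ν hopen hdense
end
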